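/- arXiv:2506.07351 — 5 statements merged into one kernel-verified Lean document; each statement's English description precedes it below -/
import Mathlib

section
/- Let M be an R-proximally smooth subset of ℝ^(d×r), meaning that for all x, y ∈ M and all v in the normal cone N_x M, ⟨v, y − x⟩ ≤ (‖v‖/(2R))‖y − x‖². Suppose f : ℝ^(d×r) → ℝ is differentiable and L-Lipschitz smooth, i.e., f(y) ≤ f(x) + ⟨∇f(x), y − x⟩ + (L/2)‖y − x‖² for all x, y. Define grad f(x) as the orthogonal projection of ∇f(x) onto the tangent space T_x M, and let L_f = (1/R)·max_{x∈M} ‖∇f(x)‖ (assumed finite). Then for all x, y ∈ M: f(y) ≤ f(x) + ⟨grad f(x), y − x⟩ + ((L + L_f)/2)‖y − x‖². -/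
open scoped RealInnerProductSpace

/-- Riemannian Lipschitz-type inequality on an R-proximally smooth set. -/
theorem stmt_0 (d r : ℕ)
    (M : Set (EuclideanSpace ℝ (Fin d × Fin r)))
    (NS : EuclideanSpace ℝ (Fin d × Fin r) → Set (EuclideanSpace ℝ (Fin d × Fin r)))
    (f : EuclideanSpace ℝ (Fin d × Fin r) → ℝ)
    (gf gradf Pn : EuclideanSpace ℝ (Fin d × Fin r) → EuclideanSpace ℝ (Fin d × Fin r))
    (R L Lf : ℝ) (hR : 0 < R)
    -- R-proximal smoothness of M
    (hprox : ∀ x ∈ M, ∀ y ∈ M, ∀ v ∈ NS x, ⟪v, y - x⟫ ≤ ‖v‖ / (2 * R) * ‖y - x‖ ^ 2)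
    -- Euclidean L-Lipschitz smoothness of f (gf is the Euclidean gradient ∇f)
    (hsmooth : ∀ x y, f y ≤ f x + ⟪gf x, y - x⟫ + L / 2 * ‖y - x‖ ^ 2)
    -- ∇f(x) = grad f(x) + P_{N_x M}(∇f(x)), tangent-normal decomposition at x ∈ M
    (hdecomp : ∀ x ∈ M, gf x = gradf x + Pn x)
    (hPnNS : ∀ x ∈ M, Pn x ∈ NS x)
    -- orthogonal projection onto the normal space does not increase the norm
    (hPnle : ∀ x ∈ M, ‖Pn x‖ ≤ ‖gf x‖)
    -- L_f = (1/R) max_{x ∈ M} ‖∇f(x)‖, i.e. ‖∇f(x)‖ ≤ R·L_f on M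
    (hLf : ∀ x ∈ M, ‖gf x‖ ≤ R * Lf) :
    ∀ x ∈ M, ∀ y ∈ M,
      f y ≤ f x + ⟪gradf x, y - x⟫ + (L + Lf) / 2 * ‖y - x‖ ^ 2 := by
  intro x hx y hy
  have h1 : ⟪Pn x, y - x⟫ ≤ ‖Pn x‖ / (2 * R) * ‖y - x‖ ^ 2 :=
    hprox x hx y hy (Pn x) (hPnNS x hx)
  have hPn : ‖Pn x‖ ≤ R * Lf := le_trans (hPnle x hx) (hLf x hx)
  have h2 : ‖Pn x‖ / (2 * R) * ‖y - x‖ ^ 2 ≤ Lf / 2 * ‖y - x‖ ^ 2 := by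
    apply mul_le_mul_of_nonneg_right _ (sq_nonneg _)
    rw [div_le_iff₀ (by positivity)]
    nlinarith
  have h3 := hsmooth x y
  have h4 : ⟪gf x, y - x⟫ = ⟪gradf x, y - x⟫ + ⟪Pn x, y - x⟫ := by
    rw [hdecomp x hx, inner_add_left]
  nlinarith [h1, h2, h3, h4]
end

section
/- Let σ₂ ∈ (0,1), L_m > 0, and α ≤ (1−σ₂)²/(4L_m). Define the 2×2 matrix Λ = [[(1+σ₂)σ₂/2 + 4L_m²((1+σ₂)/(1−σ₂))α², 2((1+σ₂)/(1−σ₂))σ₂²], [((1+σ₂)/(1−σ₂))α²L_m², (1+σ₂)σ₂/2]]. Then the spectral radius of Λ is strictly less than 1. -/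
open Matrix

set_option maxHeartbeats 1000000

private lemma quad_root_abs_lt_one (T D μ : ℝ) (hT : T < 2) (hT2 : -2 < T)
    (h1 : 0 < 1 - T + D) (h2 : 0 < 1 + T + D)
    (heq : μ ^ 2 - T * μ + D = 0) : |μ| < 1 := by
  rw [abs_lt]
  constructor
  · by_contra h
    push_neg at h
    nlinarith [mul_nonneg (by linarith : (0:ℝ) ≤ -(μ+1)) (by linarith : (0:ℝ) ≤ -(μ-1-T))]
  · by_contra h
    push_neg at h
    nlinarith [mul_nonneg (by linarith : (0:ℝ) ≤ μ-1) (by linarith : (0:ℝ) ≤ μ+1-T)]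

/-- The transition matrix Λ of the coupled consensus-error linear
system has spectral radius < 1 when α ≤ (1-σ₂)²/(4L_m). Since Λ is a nonnegative
2×2 matrix with nonnegative discriminant, all its eigenvalues are real, so this
is expressed as: every real eigenvalue has absolute value < 1. -/
theorem stmt_7 (σ₂ Lm α : ℝ) (hσ : σ₂ ∈ Set.Ioo (0 : ℝ) 1) (hLm : 0 < Lm)
    (hα0 : 0 ≤ α) (hα : α ≤ (1 - σ₂) ^ 2 / (4 * Lm)) :
    ∀ μ ∈ spectrum ℝ
      (!![(1 + σ₂) * σ₂ / 2 + 4 * Lm ^ 2 * ((1 + σ₂) / (1 - σ₂)) * α ^ 2,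
            2 * ((1 + σ₂) / (1 - σ₂)) * σ₂ ^ 2;
          ((1 + σ₂) / (1 - σ₂)) * α ^ 2 * Lm ^ 2,
            (1 + σ₂) * σ₂ / 2] : Matrix (Fin 2) (Fin 2) ℝ),
      |μ| < 1 := by
  obtain ⟨hs0, hs1⟩ := hσ
  have hden : (0:ℝ) < 1 - σ₂ := by linarith
  intro μ hμ
  -- extract the determinant (characteristic) equation
  rw [spectrum.mem_iff] at hμ
  have hdet : det ((algebraMap ℝ (Matrix (Fin 2) (Fin 2) ℝ)) μ -
      !![(1 + σ₂) * σ₂ / 2 + 4 * Lm ^ 2 * ((1 + σ₂) / (1 - σ₂)) * α ^ 2,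
            2 * ((1 + σ₂) / (1 - σ₂)) * σ₂ ^ 2;
          ((1 + σ₂) / (1 - σ₂)) * α ^ 2 * Lm ^ 2,
            (1 + σ₂) * σ₂ / 2]) = 0 := by
    by_contra h
    exact hμ ((Matrix.isUnit_iff_isUnit_det _).mpr (isUnit_iff_ne_zero.mpr h))
  clear hμ
  simp [Matrix.det_fin_two, Matrix.algebraMap_matrix_apply] at hdet
  -- abbreviations (opaque, to keep nlinarith goals small)
  obtain ⟨r, hrdef⟩ : ∃ r : ℝ, r = (1 + σ₂) / (1 - σ₂) := ⟨_, rfl⟩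
  rw [← hrdef] at hdet
  have hrpos : 0 < r := by rw [hrdef]; positivity
  have hre : r * (1 - σ₂) = 1 + σ₂ := by rw [hrdef]; field_simp
  -- bound on the step size term
  have hαLm : α * Lm ≤ (1 - σ₂) ^ 2 / 4 := by
    rw [le_div_iff₀ (by positivity : (0:ℝ) < 4 * Lm)] at hα
    nlinarith [hα]
  have hqle : α ^ 2 * Lm ^ 2 ≤ (1 - σ₂) ^ 4 / 16 := by
    have h0 : 0 ≤ α * Lm := mul_nonneg hα0 hLm.le
    nlinarith [mul_le_mul hαLm hαLm h0 (by positivity : (0:ℝ) ≤ (1 - σ₂)^2/4)]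
  have hq0 : 0 ≤ α ^ 2 * Lm ^ 2 := by positivity
  -- abstractions x = r q, y = r² q
  obtain ⟨x, hxdef⟩ : ∃ x : ℝ, x = r * (α ^ 2 * Lm ^ 2) := ⟨_, rfl⟩
  obtain ⟨y, hydef⟩ : ∃ y : ℝ, y = r ^ 2 * (α ^ 2 * Lm ^ 2) := ⟨_, rfl⟩
  have hx0 : 0 ≤ x := by rw [hxdef]; exact mul_nonneg hrpos.le hq0
  have hy0 : 0 ≤ y := by rw [hydef]; positivity
  have hxle : x ≤ (1 + σ₂) * (1 - σ₂) ^ 3 / 16 := by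
    rw [hxdef]
    calc r * (α ^ 2 * Lm ^ 2) ≤ r * ((1 - σ₂) ^ 4 / 16) :=
          mul_le_mul_of_nonneg_left hqle hrpos.le
      _ = (r * (1 - σ₂)) * (1 - σ₂) ^ 3 / 16 := by ring
      _ = (1 + σ₂) * (1 - σ₂) ^ 3 / 16 := by rw [hre]
  have hyle : y ≤ (1 + σ₂) ^ 2 * (1 - σ₂) ^ 2 / 16 := by
    rw [hydef]
    calc r ^ 2 * (α ^ 2 * Lm ^ 2) ≤ r ^ 2 * ((1 - σ₂) ^ 4 / 16) :=
          mul_le_mul_of_nonneg_left hqle (by positivity)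
      _ = (r * (1 - σ₂)) ^ 2 * (1 - σ₂) ^ 2 / 16 := by ring
      _ = (1 + σ₂) ^ 2 * (1 - σ₂) ^ 2 / 16 := by rw [hre]
  -- trace and determinant
  obtain ⟨T, hTdef⟩ : ∃ T : ℝ, T = (1 + σ₂) * σ₂ + 4 * x := ⟨_, rfl⟩
  obtain ⟨D, hDdef⟩ : ∃ D : ℝ,
      D = ((1 + σ₂) * σ₂ / 2 + 4 * x) * ((1 + σ₂) * σ₂ / 2) - 2 * y * σ₂ ^ 2 :=
    ⟨_, rfl⟩
  have heq : μ ^ 2 - T * μ + D = 0 := by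
    rw [hTdef, hDdef, hxdef, hydef]
    linear_combination hdet
  have h1e : 0 ≤ 1 - (1 + σ₂) * σ₂ / 2 := by nlinarith [hs0, hs1]
  have hT : T < 2 := by
    rw [hTdef]
    nlinarith [hxle, mul_pos hden hden, mul_pos (mul_pos hden hden) hden,
      mul_pos hs0 hden]
  have hT2 : -2 < T := by
    rw [hTdef]
    have : 0 ≤ (1 + σ₂) * σ₂ := by positivity
    linarith
  have hQ : 0 < 6 + 9 * σ₂ + 4 * σ₂ ^ 2 - 3 * σ₂ ^ 3 - 2 * σ₂ ^ 4 := by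
    have h3 : σ₂ ^ 3 < 1 := pow_lt_one₀ hs0.le hs1 (by norm_num)
    have h4 : σ₂ ^ 4 < 1 := pow_lt_one₀ hs0.le hs1 (by norm_num)
    nlinarith [hs0, sq_nonneg σ₂]
  have hfac : 0 < (1 - σ₂) ^ 2 * (6 + 9 * σ₂ + 4 * σ₂ ^ 2 - 3 * σ₂ ^ 3 - 2 * σ₂ ^ 4) :=
    mul_pos (pow_pos hden 2) hQ
  have h1 : 0 < 1 - T + D := by
    rw [hTdef, hDdef]
    nlinarith [mul_le_mul_of_nonneg_right hxle h1e, hyle, hfac, sq_nonneg σ₂, hs0]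
  have h2 : 0 < 1 + T + D := by
    rw [hTdef, hDdef]
    nlinarith [hyle, hx0, hs0, hs1, sq_nonneg σ₂, mul_nonneg hx0 (mul_nonneg
      (by linarith : (0:ℝ) ≤ 1 + σ₂) hs0.le), mul_pos hden hden]
  exact quad_root_abs_lt_one T D μ hT hT2 h1 h2 heq
end

section
/- Let σ₂ ∈ (0,1), L_m > 0, and α ≤ (1−σ₂)²/(16L_m). With Λ as in the consensus linear system (Λ₁₁ = (1+σ₂)σ₂/2 + 4L_m²((1+σ₂)/(1−σ₂))α², Λ₁₂ = 2((1+σ₂)/(1−σ₂))σ₂², Λ₂₁ = ((1+σ₂)/(1−σ₂))α²L_m², Λ₂₂ = (1+σ₂)σ₂/2), the determinant of I − Λ satisfies det(I − Λ) ≥ (1−σ₂)²/8. -/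
open Matrix

/-- Lower bound on det(I - Λ) for the consensus linear system
under the step-size restriction α ≤ (1-σ₂)²/(16L_m). -/
theorem stmt_8 (σ₂ Lm α : ℝ) (hσ : σ₂ ∈ Set.Ioo (0 : ℝ) 1) (hLm : 0 < Lm)
    (hα0 : 0 ≤ α) (hα : α ≤ (1 - σ₂) ^ 2 / (16 * Lm)) :
    (1 - σ₂) ^ 2 / 8 ≤
      Matrix.det
        ((1 : Matrix (Fin 2) (Fin 2) ℝ) -
          !![(1 + σ₂) * σ₂ / 2 + 4 * Lm ^ 2 * ((1 + σ₂) / (1 - σ₂)) * α ^ 2,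
               2 * ((1 + σ₂) / (1 - σ₂)) * σ₂ ^ 2;
             ((1 + σ₂) / (1 - σ₂)) * α ^ 2 * Lm ^ 2,
               (1 + σ₂) * σ₂ / 2]) := by
  obtain ⟨hs0, hs1⟩ := hσ
  have h1s : 0 < 1 - σ₂ := by linarith
  have hLα : Lm * α ≤ (1 - σ₂) ^ 2 / 16 := by
    rw [le_div_iff₀ (by positivity : (0:ℝ) < 16 * Lm)] at hα
    nlinarith
  have hb : (Lm * α) ^ 2 ≤ (1 - σ₂) ^ 4 / 256 := by
    nlinarith [mul_nonneg hLm.le hα0]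
  have h3 : (1 + σ₂) / (1 - σ₂) * (Lm * α) ^ 2 ≤ (1 - σ₂) ^ 3 / 128 := by
    rw [div_mul_eq_mul_div, div_le_div_iff₀ h1s (by norm_num)]
    nlinarith [mul_nonneg hLm.le hα0]
  have h4 : ((1 + σ₂) / (1 - σ₂)) ^ 2 * (Lm * α) ^ 2 ≤ (1 - σ₂) ^ 2 / 64 := by
    rw [div_pow, div_mul_eq_mul_div, div_le_div_iff₀ (by positivity) (by norm_num)]
    nlinarith [hb, mul_le_mul_of_nonneg_right (show (1+σ₂)^2 ≤ 4 by nlinarith) (sq_nonneg (Lm*α))]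
  rw [Matrix.det_fin_two]
  simp only [Matrix.sub_apply, Matrix.one_apply, Matrix.cons_val', Matrix.cons_val_zero,
    Matrix.cons_val_one, Matrix.head_cons, Matrix.head_fin_const, Matrix.empty_val',
    Matrix.cons_val_fin_one, Matrix.of_apply]
  norm_num
  nlinarith [h3, h4, sq_nonneg (1 - σ₂), sq_nonneg σ₂, mul_nonneg (mul_nonneg hα0 hα0) hLm.le,
    mul_le_mul_of_nonneg_left h3 (by nlinarith : (0:ℝ) ≤ 1 - (1 + σ₂) * σ₂ / 2),
    mul_le_mul_of_nonneg_left h4 (by nlinarith : (0:ℝ) ≤ σ₂ ^ 2)]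
end

section
/- Let Λ be a 2×2 nonnegative matrix with spectral radius less than 1, and let nonnegative vector sequences (Φ_k), (Υ_k) in ℝ² satisfy Φ_k ≤ ΛΦ_{k−1} + Υ_{k−1} componentwise for all k ≥ 1. Then for any K, ∑_{k=0}^K Φ_k ≤ (I − Λ)^{−1}(Φ₀ + ∑_{k=0}^K Υ_k) componentwise. -/
/-!
Summing the recursion from `1` to `K` and enlarging the partial sums of `Φ` on the right (all
terms are nonnegative and `Λ ≥ 0`) gives `S ≤ Λ S + Φ₀ + ∑ Υ_k` for `S = ∑_{k ≤ K} Φ_k`, i.e.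
`(I - Λ) S ≤ Φ₀ + ∑ Υ_k`. For a nonnegative `2 × 2` matrix the discriminant of the characteristic
polynomial is `(a - d)² + 4bc ≥ 0`, so the Perron root `(a + d + √((a - d)² + 4bc)) / 2` is a real
eigenvalue; it being `< 1` forces `det (I - Λ) > 0` and `a, d < 1`, so the adjugate formula shows
`(I - Λ)⁻¹ ≥ 0` entrywise, and applying it preserves the inequality.
-/

open Finset

namespace Matrix

variable {n R : Type*} [Fintype n]

theorem mulVec_mono_of_nonneg [Semiring R] [PartialOrder R] [IsOrderedRing R] {m : Type*}
    {M : Matrix m n R} (hM : ∀ i j, 0 ≤ M i j) {u v : n → R} (huv : u ≤ v) :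
    M *ᵥ u ≤ M *ᵥ v :=
  fun i => sum_le_sum fun j _ => mul_le_mul_of_nonneg_left (huv j) (hM i j)

theorem le_nonsing_inv_mulVec_of_mulVec_le [DecidableEq n] [Field R] [LinearOrder R]
    [IsStrictOrderedRing R] {A : Matrix n n R} (hA : IsUnit A.det) (hinv : ∀ i j, 0 ≤ A⁻¹ i j)
    {x y : n → R} (h : A *ᵥ x ≤ y) : x ≤ A⁻¹ *ᵥ y :=
  calc x = A⁻¹ *ᵥ (A *ᵥ x) := by rw [mulVec_mulVec, nonsing_inv_mul A hA, one_mulVec]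
    _ ≤ A⁻¹ *ᵥ y := mulVec_mono_of_nonneg hinv h

theorem one_sub_mulVec_sum_range_le [DecidableEq n] [CommRing R] [PartialOrder R]
    [IsOrderedRing R] {Λ : Matrix n n R} (hΛ : ∀ i j, 0 ≤ Λ i j) {Φ Υ : ℕ → n → R}
    (hΦ : ∀ k, 0 ≤ Φ k) (hΥ : ∀ k, 0 ≤ Υ k) (hrec : ∀ k, Φ (k + 1) ≤ Λ *ᵥ Φ k + Υ k)
    (K : ℕ) :
    (1 - Λ) *ᵥ ∑ k ∈ range (K + 1), Φ k ≤ Φ 0 + ∑ k ∈ range (K + 1), Υ k := by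
  set S := ∑ k ∈ range (K + 1), Φ k
  have hS : ∑ k ∈ range K, Φ k ≤ S :=
    sum_le_sum_of_subset_of_nonneg (range_subset_range.2 K.le_succ) fun k _ _ => hΦ k
  have hΥK : ∑ k ∈ range K, Υ k ≤ ∑ k ∈ range (K + 1), Υ k :=
    sum_le_sum_of_subset_of_nonneg (range_subset_range.2 K.le_succ) fun k _ _ => hΥ k
  have hstep : ∑ k ∈ range K, Φ (k + 1) ≤ Λ *ᵥ ∑ k ∈ range K, Φ k + ∑ k ∈ range K, Υ k := by
    rw [mulVec_sum, ← sum_add_distrib]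
    exact sum_le_sum fun k _ => hrec k
  rw [sub_mulVec, one_mulVec, sub_le_iff_le_add]
  calc S = ∑ k ∈ range K, Φ (k + 1) + Φ 0 := sum_range_succ' Φ K
    _ ≤ Λ *ᵥ S + ∑ k ∈ range (K + 1), Υ k + Φ 0 := by
      gcongr
      exact hstep.trans (add_le_add (mulVec_mono_of_nonneg hΛ hS) hΥK)
    _ = Φ 0 + ∑ k ∈ range (K + 1), Υ k + Λ *ᵥ S := by abel

variable {Λ : Matrix (Fin 2) (Fin 2) ℝ}

theorem fin_two_perron_root_mem_spectrum (h : 0 ≤ Λ 0 1 * Λ 1 0) :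
    (Λ 0 0 + Λ 1 1 + √((Λ 0 0 - Λ 1 1) ^ 2 + 4 * (Λ 0 1 * Λ 1 0))) / 2 ∈ spectrum ℝ Λ := by
  have hs := Real.sq_sqrt (by positivity : 0 ≤ (Λ 0 0 - Λ 1 1) ^ 2 + 4 * (Λ 0 1 * Λ 1 0))
  rw [spectrum.mem_iff, isUnit_iff_isUnit_det, isUnit_iff_ne_zero, not_ne_iff, det_fin_two]
  simp only [sub_apply, algebraMap_matrix_apply, Fin.one_eq_zero_iff]
  norm_num
  nlinarith

/-- With `s = √((a - d)² + 4bc) ≥ |a - d|`, both diagonal entries are at most the Perron root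
`μ = (a + d + s) / 2 < 1`, and `det (1 - Λ) = (1 - μ) (1 - (a + d - s) / 2) > 0`. -/
theorem fin_two_diag_lt_one_and_det_one_sub_pos (h : 0 ≤ Λ 0 1 * Λ 1 0)
    (hρ : ∀ μ ∈ spectrum ℝ Λ, μ < 1) :
    Λ 0 0 < 1 ∧ Λ 1 1 < 1 ∧ 0 < (1 - Λ).det := by
  have hμ := hρ _ (fin_two_perron_root_mem_spectrum h)
  set s := √((Λ 0 0 - Λ 1 1) ^ 2 + 4 * (Λ 0 1 * Λ 1 0))
  have hs : s ^ 2 = (Λ 0 0 - Λ 1 1) ^ 2 + 4 * (Λ 0 1 * Λ 1 0) := Real.sq_sqrt (by positivity)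
  have hs0 : 0 ≤ s := Real.sqrt_nonneg _
  have hsad : |Λ 0 0 - Λ 1 1| ≤ s := Real.abs_le_sqrt (by nlinarith)
  rw [abs_le] at hsad
  refine ⟨by linarith, by linarith, ?_⟩
  rw [det_fin_two]
  simp only [sub_apply, one_apply_eq, one_apply_ne zero_ne_one, one_apply_ne one_ne_zero]
  nlinarith

theorem fin_two_inv_one_sub_nonneg (hΛ : ∀ i j, 0 ≤ Λ i j) (hρ : ∀ μ ∈ spectrum ℝ Λ, μ < 1)
    (i j : Fin 2) : 0 ≤ (1 - Λ)⁻¹ i j := by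
  obtain ⟨ha, hd, hdet⟩ :=
    fin_two_diag_lt_one_and_det_one_sub_pos (mul_nonneg (hΛ 0 1) (hΛ 1 0)) hρ
  rw [inv_def, Ring.inverse_eq_inv', adjugate_fin_two, smul_apply, smul_eq_mul]
  refine mul_nonneg (inv_nonneg.2 hdet.le) ?_
  fin_cases i <;> fin_cases j <;> simp <;> linarith [hΛ 0 1, hΛ 1 0]

end Matrix

open Matrix in
/-- For a 2×2 entrywise-nonnegative matrix Λ with spectral radius < 1
(all eigenvalues of such Λ are real, so this is: every real eigenvalue has
|μ| < 1), and nonnegative sequences satisfying Φ_k ≤ ΛΦ_{k-1} + Υ_{k-1}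
componentwise, the partial sums satisfy
∑_{k=0}^K Φ_k ≤ (I - Λ)⁻¹(Φ₀ + ∑_{k=0}^K Υ_k) componentwise. -/
theorem stmt_9 (Λ : Matrix (Fin 2) (Fin 2) ℝ)
    (hΛ : ∀ i j, 0 ≤ Λ i j)
    (hρ : ∀ μ ∈ spectrum ℝ Λ, |μ| < 1)
    (Φ Υ : ℕ → Fin 2 → ℝ)
    (hΦ : ∀ k i, 0 ≤ Φ k i) (hΥ : ∀ k i, 0 ≤ Υ k i)
    (hrec : ∀ k, 1 ≤ k → ∀ i, Φ k i ≤ Λ.mulVec (Φ (k - 1)) i + Υ (k - 1) i) :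
    ∀ K, ∀ i, (∑ k ∈ range (K + 1), Φ k) i ≤
      ((1 - Λ)⁻¹).mulVec (Φ 0 + ∑ k ∈ range (K + 1), Υ k) i := by
  have hρ' : ∀ μ ∈ spectrum ℝ Λ, μ < 1 := fun μ hμ => (le_abs_self μ).trans_lt (hρ μ hμ)
  have hdet : IsUnit (1 - Λ).det :=
    (fin_two_diag_lt_one_and_det_one_sub_pos (mul_nonneg (hΛ 0 1) (hΛ 1 0)) hρ').2.2.ne'.isUnit
  intro K
  exact le_nonsing_inv_mulVec_of_mulVec_le hdet (fin_two_inv_one_sub_nonneg hΛ hρ')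
    (one_sub_mulVec_sum_range_le hΛ (fun k => hΦ k) (fun k => hΥ k)
      (fun k => hrec (k + 1) k.succ_pos) K)
end

section
/- For x ∈ ℝ^{d×r} with full column rank and N(x) = ‖xᵀx − I_r‖², the gradient flow/Potter iteration x_{k+1} = x_k − β∇N(x_k) = x_k − 4β x_k(x_kᵀx_k − I_r) decreases N: if the eigenvalues of x_kᵀx_k lie in (0, 2) and β > 0 is sufficiently small (e.g., 4β ≤ 1/4), then N(x_{k+1}) ≤ N(x_k). -/
open Matrix

section helpers
variable {r : ℕ} (U : Matrix (Fin r) (Fin r) ℝ)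

lemma cj_sub (f g : Fin r → ℝ) :
    U * diagonal f * star U - U * diagonal g * star U
      = U * diagonal (fun i => f i - g i) * star U := by
  have h : diagonal (fun i => f i - g i) = diagonal f - diagonal g := by
    rw [Matrix.diagonal_sub]
  rw [h, Matrix.mul_sub, Matrix.sub_mul]

lemma cj_smul (c : ℝ) (f : Fin r → ℝ) :
    c • (U * diagonal f * star U) = U * diagonal (fun i => c * f i) * star U := by
  have h : diagonal (fun i => c * f i) = c • diagonal f := by
    ext i j
    by_cases hij : i = j <;> simp [Matrix.diagonal_apply, hij]
  rw [h, mul_smul_comm, smul_mul_assoc]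

lemma cj_one (hUu : U * star U = 1) :
    U * diagonal (fun _ => (1:ℝ)) * star U = 1 := by
  have h : diagonal (fun _ : Fin r => (1:ℝ)) = 1 := Matrix.diagonal_one
  rw [h, Matrix.mul_one, hUu]

lemma cj_mul (huU : star U * U = 1) (f g : Fin r → ℝ) :
    (U * diagonal f * star U) * (U * diagonal g * star U)
      = U * diagonal (fun i => f i * g i) * star U := by
  have h : diagonal (fun i => f i * g i) = diagonal f * diagonal g := by
    rw [Matrix.diagonal_mul_diagonal]
  rw [h]
  calc (U * diagonal f * star U) * (U * diagonal g * star U)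
      = U * (diagonal f * ((star U * U) * (diagonal g * star U))) := by
        simp only [Matrix.mul_assoc]
    _ = U * (diagonal f * (diagonal g * star U)) := by rw [huU, Matrix.one_mul]
    _ = U * (diagonal f * diagonal g) * star U := by simp only [Matrix.mul_assoc]

lemma cj_trace (huU : star U * U = 1) (f : Fin r → ℝ) :
    (U * diagonal f * star U).trace = ∑ i, f i := by
  rw [Matrix.trace_mul_cycle, huU, Matrix.one_mul, Matrix.trace_diagonal]

lemma cj_transpose (f : Fin r → ℝ) :
    (U * diagonal f * star U)ᵀ = U * diagonal f * star U := by
  have hst : star U = Uᵀ := Matrix.conjTranspose_eq_transpose_of_trivial U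
  rw [hst, Matrix.transpose_mul, Matrix.transpose_mul, Matrix.transpose_transpose,
    Matrix.diagonal_transpose, Matrix.mul_assoc]

end helpers

lemma potter_scalar (lam c : ℝ) (h0 : 0 < lam) (h2 : lam < 2) (hc0 : 0 < c) (hc : c ≤ 1/4) :
    ((1 - c*(lam-1)) * lam * ((1 - c*(lam-1))) - 1) * ((1 - c*(lam-1)) * lam * ((1 - c*(lam-1))) - 1)
      ≤ (lam-1) * (lam-1) := by
  have hfact : (1 - c*(lam-1)) * lam * ((1 - c*(lam-1))) - 1
      = (lam-1)*((1-c*lam)^2 - c^2*lam) := by ring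
  rw [hfact]
  have h1 : 0 < c*lam := mul_pos hc0 h0
  have h1' : c*lam < 1/2 := by nlinarith
  have hB1 : (1-c*lam)^2 - c^2*lam ≤ 1 := by
    nlinarith [sq_nonneg c, mul_pos (mul_pos hc0 hc0) h0]
  have hB2 : -1 ≤ (1-c*lam)^2 - c^2*lam := by
    nlinarith [sq_nonneg (1-c*lam), mul_pos (mul_pos hc0 hc0) h0]
  have hBsq : ((1-c*lam)^2 - c^2*lam)^2 ≤ 1 := by nlinarith
  nlinarith [mul_le_mul_of_nonneg_left hBsq (sq_nonneg (lam-1))]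

lemma step_eq {d r : ℕ} (x : Matrix (Fin d) (Fin r) ℝ) (c : ℝ)
    (S : Matrix (Fin r) (Fin r) ℝ) (hSt : Sᵀ = S) (hSdef : S = xᵀ * x) :
    (x - c • (x * (S - 1)))ᵀ * (x - c • (x * (S - 1)))
      = (1 - c • (S - 1)) * S * (1 - c • (S - 1)) := by
  have hx' : x - c • (x * (S - 1)) = x * (1 - c • (S - 1)) := by
    conv_rhs => rw [Matrix.mul_sub, Matrix.mul_one, Matrix.mul_smul]
  have hPt : (1 - c • (S - 1))ᵀ = 1 - c • (S - 1) := by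
    rw [Matrix.transpose_sub, Matrix.transpose_one, Matrix.transpose_smul,
      Matrix.transpose_sub, hSt, Matrix.transpose_one]
  rw [hx', Matrix.transpose_mul, hPt, hSdef]
  simp only [Matrix.mul_assoc]


/-- One Potter / gradient step on N(x) = ‖xᵀx - I‖_F² does not
increase N: if x has full column rank, the eigenvalues of xᵀx lie in (0,2),
β > 0 and 4β ≤ 1/4, then for x' = x - 4β·x(xᵀx - I) we have N(x') ≤ N(x). -/
theorem stmt_16 (d r : ℕ) (x : Matrix (Fin d) (Fin r) ℝ) (β : ℝ)
    (hβ : 0 < β) (hβ' : 4 * β ≤ 1 / 4)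
    (hrank : x.rank = r)
    (hspec : ∀ μ ∈ spectrum ℝ (xᵀ * x), 0 < μ ∧ μ < 2) :
    (((x - (4 * β) • (x * (xᵀ * x - 1)))ᵀ * (x - (4 * β) • (x * (xᵀ * x - 1))) - 1)ᵀ *
        ((x - (4 * β) • (x * (xᵀ * x - 1)))ᵀ * (x - (4 * β) • (x * (xᵀ * x - 1))) - 1)).trace
      ≤ ((xᵀ * x - 1)ᵀ * (xᵀ * x - 1)).trace := by
  have hS : (xᵀ * x).IsHermitian := by
    have h := Matrix.isHermitian_conjTranspose_mul_self x
    rwa [Matrix.conjTranspose_eq_transpose_of_trivial] at h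
  set c : ℝ := 4 * β with hcdef
  have hc0 : 0 < c := by positivity
  set S : Matrix (Fin r) (Fin r) ℝ := xᵀ * x with hSdef
  have hSt : Sᵀ = S := by
    rw [← Matrix.conjTranspose_eq_transpose_of_trivial]; exact hS
  set U : Matrix (Fin r) (Fin r) ℝ := (hS.eigenvectorUnitary : Matrix (Fin r) (Fin r) ℝ)
    with hUdef
  have hUu : U * star U = 1 := (Matrix.mem_unitaryGroup_iff).mp hS.eigenvectorUnitary.2
  have huU : star U * U = 1 := (Matrix.mem_unitaryGroup_iff').mp hS.eigenvectorUnitary.2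
  set w : Fin r → ℝ := hS.eigenvalues with hwdef
  have hSrep : S = U * diagonal w * star U := by
    have h := hS.spectral_theorem
    simpa [RCLike.ofReal_real_eq_id] using h
  have hw : ∀ i, 0 < w i ∧ w i < 2 := fun i => hspec _ (hS.eigenvalues_mem_spectrum_real i)
  have hT : S - 1 = U * diagonal (fun i => w i - 1) * star U := by
    rw [hSrep, ← cj_one U hUu, cj_sub]
  have hP : 1 - c • (S - 1) = U * diagonal (fun i => 1 - c * (w i - 1)) * star U := by
    rw [hT, cj_smul, ← cj_one U hUu, cj_sub]
  have hM : (1 - c • (S - 1)) * S * (1 - c • (S - 1)) - 1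
      = U * diagonal (fun i => (1 - c * (w i - 1)) * w i * (1 - c * (w i - 1)) - 1) * star U := by
    rw [hP, hSrep, cj_mul U huU, cj_mul U huU, ← cj_one U hUu, cj_sub]
  rw [step_eq x c S hSt hSdef, hM, hT, cj_transpose, cj_transpose,
    cj_mul U huU, cj_mul U huU, cj_trace U huU, cj_trace U huU]
  refine Finset.sum_le_sum fun i _ => ?_
  exact potter_scalar (w i) c (hw i).1 (hw i).2 hc0 hβ'
end
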